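/- arXiv:2107.09544 — 3 statements merged into one kernel-verified Lean document; each statement's English description precedes it below -/
import Mathlib

section
/- For real third-order tensors A of size n₁×n₂×n₃ and B of size n₂×n₄×n₃, the t-product satisfies ‖A*B‖_F ≤ ‖A‖₂·‖B‖_F and ‖A*B‖_F ≤ ‖A‖_F·‖B‖₂. -/
open scoped Matrix.Norms.L2Operator

noncomputable section

/-- The t-product of third-order tensors. -/
def tProd {n₁ n₂ n₃ n₄ : ℕ} [NeZero n₃] (A : Fin n₁ → Fin n₂ → ZMod n₃ → ℝ)
    (B : Fin n₂ → Fin n₄ → ZMod n₃ → ℝ) : Fin n₁ → Fin n₄ → ZMod n₃ → ℝ :=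
  fun i j k => ∑ l : Fin n₂, ∑ m : ZMod n₃, A i l (k - m) * B l j m

/-- The Frobenius norm of a third-order tensor. -/
def frobNorm {n₁ n₂ n₃ : ℕ} [NeZero n₃] (A : Fin n₁ → Fin n₂ → ZMod n₃ → ℝ) : ℝ :=
  Real.sqrt (∑ i : Fin n₁, ∑ j : Fin n₂, ∑ k : ZMod n₃, (A i j k) ^ 2)

/-- The block circulant matrix of a third-order tensor. -/
def bcirc {n₁ n₂ n₃ : ℕ} (A : Fin n₁ → Fin n₂ → ZMod n₃ → ℝ) :
    Matrix (Fin n₁ × ZMod n₃) (Fin n₂ × ZMod n₃) ℝ :=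
  fun p q => A p.1 q.1 (p.2 - q.2)

/-- The spectral norm of a third-order tensor: the L2 operator norm of its
block circulant matrix. -/
def specNorm {n₁ n₂ n₃ : ℕ} [NeZero n₃] (A : Fin n₁ → Fin n₂ → ZMod n₃ → ℝ) : ℝ :=
  ‖bcirc A‖

/-- The identity tensor. -/
def tId (n n₃ : ℕ) : Fin n → Fin n → ZMod n₃ → ℝ :=
  fun i j k => if i = j ∧ k = 0 then 1 else 0

/-- The tensor transpose. -/
def tTrans {n₁ n₂ n₃ : ℕ} (A : Fin n₁ → Fin n₂ → ZMod n₃ → ℝ) :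
    Fin n₂ → Fin n₁ → ZMod n₃ → ℝ :=
  fun i j k => A j i (-k)

/-- `X` is a Moore-Penrose inverse of `A`. -/
def IsMPInv {n₁ n₂ n₃ : ℕ} [NeZero n₃] (A : Fin n₁ → Fin n₂ → ZMod n₃ → ℝ)
    (X : Fin n₂ → Fin n₁ → ZMod n₃ → ℝ) : Prop :=
  tProd (tProd A X) A = A ∧ tProd (tProd X A) X = X ∧
    tTrans (tProd A X) = tProd A X ∧ tTrans (tProd X A) = tProd X A

/-- The `i`-th DFT block of a third-order tensor. -/
def dftBlock {n₁ n₂ n₃ : ℕ} [NeZero n₃] (A : Fin n₁ → Fin n₂ → ZMod n₃ → ℝ) (i : ZMod n₃) :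
    Matrix (Fin n₁) (Fin n₂) ℂ :=
  fun p q => ∑ k : ZMod n₃,
    Complex.exp (-2 * Real.pi * Complex.I * (i.val : ℂ) * (k.val : ℂ) / (n₃ : ℂ)) * (A p q k : ℂ)

end

/-!
Arranging the lateral slices of `B` as the columns of a matrix `unfold B` turns the t-product
into a matrix product, `bcirc A * unfold B = unfold (A * B)`, and the Frobenius norm of `C * M`
is at most `‖C‖₂ ‖M‖_F`, column by column. Symmetrically, `unfoldRow A * bcirc B = unfoldRow (A * B)`
for the row arrangement of `A` with reversed tube index, and `‖M * C‖_F ≤ ‖M‖_F ‖C‖₂` follows by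
transposition, since transposing preserves the L2 operator norm.
-/

namespace Matrix

variable {m n p : Type*} [Fintype m] [Fintype n] [Fintype p]

lemma sum_sq_mulVec_le [DecidableEq n] (C : Matrix m n ℝ) (x : n → ℝ) :
    ∑ i, (C *ᵥ x) i ^ 2 ≤ ‖C‖ ^ 2 * ∑ j, x j ^ 2 := by
  have h := C.l2_opNorm_mulVec (WithLp.toLp 2 x)
  rw [← sq_le_sq₀ (norm_nonneg _) (by positivity), mul_pow,
    EuclideanSpace.real_norm_sq_eq, EuclideanSpace.real_norm_sq_eq] at h
  simpa using h

lemma sum_sq_mul_le [DecidableEq n] (C : Matrix m n ℝ) (M : Matrix n p ℝ) :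
    ∑ i, ∑ j, (C * M) i j ^ 2 ≤ ‖C‖ ^ 2 * ∑ i, ∑ j, M i j ^ 2 := by
  rw [Finset.sum_comm, Finset.sum_comm (f := fun i j => M i j ^ 2), Finset.mul_sum]
  exact Finset.sum_le_sum fun j _ => C.sum_sq_mulVec_le (M · j)

lemma sum_sq_transpose (M : Matrix m n ℝ) :
    ∑ i, ∑ j, Mᵀ i j ^ 2 = ∑ i, ∑ j, M i j ^ 2 :=
  Finset.sum_comm

lemma sum_sq_mul_le' [DecidableEq p] (M : Matrix m n ℝ) (C : Matrix n p ℝ) :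
    ∑ i, ∑ j, (M * C) i j ^ 2 ≤ ‖C‖ ^ 2 * ∑ i, ∑ j, M i j ^ 2 := by
  classical
  have h := Cᵀ.sum_sq_mul_le Mᵀ
  rwa [← transpose_mul, sum_sq_transpose, sum_sq_transpose,
    ← conjTranspose_eq_transpose_of_trivial, l2_opNorm_conjTranspose] at h

end Matrix

lemma Real.sqrt_le_mul_sqrt {x y c : ℝ} (hc : 0 ≤ c) (h : x ≤ c ^ 2 * y) : √x ≤ c * √y := by
  rw [← Real.sqrt_sq hc, ← Real.sqrt_mul (sq_nonneg c)]
  exact Real.sqrt_le_sqrt h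

section TensorUnfolding

variable {n₁ n₂ n₃ n₄ : ℕ} [NeZero n₃]

def unfold (A : Fin n₁ → Fin n₂ → ZMod n₃ → ℝ) : Matrix (Fin n₁ × ZMod n₃) (Fin n₂) ℝ :=
  fun p j => A p.1 j p.2

/-- Negating the tube index turns the circular convolution in `tProd` into a right
multiplication by `bcirc B`. -/
def unfoldRow (A : Fin n₁ → Fin n₂ → ZMod n₃ → ℝ) : Matrix (Fin n₁) (Fin n₂ × ZMod n₃) ℝ :=
  fun i q => A i q.1 (-q.2)

lemma frobNorm_eq_unfold (A : Fin n₁ → Fin n₂ → ZMod n₃ → ℝ) :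
    frobNorm A = √(∑ p, ∑ j, unfold A p j ^ 2) := by
  simp only [frobNorm, unfold, Fintype.sum_prod_type]
  exact congrArg _ (Finset.sum_congr rfl fun i _ => Finset.sum_comm)

lemma frobNorm_eq_unfoldRow (A : Fin n₁ → Fin n₂ → ZMod n₃ → ℝ) :
    frobNorm A = √(∑ i, ∑ q, unfoldRow A i q ^ 2) := by
  simp only [frobNorm, unfoldRow, Fintype.sum_prod_type]
  congr! 3 with i - j
  exact (Fintype.sum_equiv (Equiv.neg (ZMod n₃)) _ _ fun k => by simp).symm

lemma bcirc_mul_unfold (A : Fin n₁ → Fin n₂ → ZMod n₃ → ℝ) (B : Fin n₂ → Fin n₄ → ZMod n₃ → ℝ) :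
    bcirc A * unfold B = unfold (tProd A B) := by
  ext p j
  simp [Matrix.mul_apply, tProd, bcirc, unfold, Fintype.sum_prod_type]

lemma unfoldRow_mul_bcirc (A : Fin n₁ → Fin n₂ → ZMod n₃ → ℝ) (B : Fin n₂ → Fin n₄ → ZMod n₃ → ℝ) :
    unfoldRow A * bcirc B = unfoldRow (tProd A B) := by
  ext i ⟨j, k⟩
  simp only [Matrix.mul_apply, tProd, bcirc, unfoldRow, Fintype.sum_prod_type]
  refine Finset.sum_congr rfl fun l _ => ?_
  exact Fintype.sum_equiv (Equiv.subRight k) _ _ fun m => by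
    rw [Equiv.subRight_apply, show -k - (m - k) = -m by ring]

lemma frobNorm_tProd_le_specNorm_mul (A : Fin n₁ → Fin n₂ → ZMod n₃ → ℝ)
    (B : Fin n₂ → Fin n₄ → ZMod n₃ → ℝ) : frobNorm (tProd A B) ≤ specNorm A * frobNorm B := by
  rw [frobNorm_eq_unfold, frobNorm_eq_unfold, ← bcirc_mul_unfold]
  exact Real.sqrt_le_mul_sqrt (norm_nonneg _) ((bcirc A).sum_sq_mul_le _)

lemma frobNorm_tProd_le_mul_specNorm (A : Fin n₁ → Fin n₂ → ZMod n₃ → ℝ)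
    (B : Fin n₂ → Fin n₄ → ZMod n₃ → ℝ) : frobNorm (tProd A B) ≤ frobNorm A * specNorm B := by
  rw [frobNorm_eq_unfoldRow, frobNorm_eq_unfoldRow, ← unfoldRow_mul_bcirc, mul_comm]
  exact Real.sqrt_le_mul_sqrt (norm_nonneg _) ((unfoldRow A).sum_sq_mul_le' _)

end TensorUnfolding

theorem tprod_frobNorm_le_general (n₁ n₂ n₃ n₄ : ℕ) [NeZero n₃]
    (A : Fin n₁ → Fin n₂ → ZMod n₃ → ℝ) (B : Fin n₂ → Fin n₄ → ZMod n₃ → ℝ) :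
    frobNorm (tProd A B) ≤ specNorm A * frobNorm B ∧
      frobNorm (tProd A B) ≤ frobNorm A * specNorm B :=
  ⟨frobNorm_tProd_le_specNorm_mul A B, frobNorm_tProd_le_mul_specNorm A B⟩

theorem tprod_frobNorm_le (n₁ n₂ n₃ n₄ : ℕ) [NeZero n₃]
    (hn₁ : 0 < n₁) (hn₂ : 0 < n₂) (hn₄ : 0 < n₄)
    (A : Fin n₁ → Fin n₂ → ZMod n₃ → ℝ) (B : Fin n₂ → Fin n₄ → ZMod n₃ → ℝ) :
    frobNorm (tProd A B) ≤ specNorm A * frobNorm B ∧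
      frobNorm (tProd A B) ≤ frobNorm A * specNorm B :=
  tprod_frobNorm_le_general n₁ n₂ n₃ n₄ A B
end

section
/- For real third-order tensors A of size n₁×n₂×n₃ and B of size n₂×n₄×n₃, the t-product satisfies ‖A*B‖₂ ≤ ‖A‖₂·‖B‖₂ and ‖A*B‖_F ≤ √n₃·‖A‖_F·‖B‖_F. -/
open scoped Matrix.Norms.L2Operator

/-! Both inequalities come from `bcirc (A * B) = bcirc A * bcirc B`. The spectral bound is then
submultiplicativity of the matrix operator norm. For the Frobenius bound, every entry of `A`
occurs exactly `n₃` times in `bcirc A`, so the Frobenius norm of `bcirc A` is `√n₃ ‖A‖_F`, and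
submultiplicativity of the matrix Frobenius norm leaves one spare factor `√n₃`. -/

theorem Matrix.sqrt_sum_sq_mul_le {l m n : Type*} [Fintype l] [Fintype m] [Fintype n]
    (M : Matrix l m ℝ) (N : Matrix m n ℝ) :
    √(∑ i, ∑ k, (M * N) i k ^ 2) ≤ √(∑ i, ∑ j, M i j ^ 2) * √(∑ j, ∑ k, N j k ^ 2) := by
  have frobenius := Matrix.frobenius_norm_mul M N
  simpa only [Matrix.frobenius_norm_def, Real.norm_eq_abs, Real.rpow_two, sq_abs,
    ← Real.sqrt_eq_rpow] using frobenius

theorem Fintype.sum_sum_sub {G M : Type*} [AddGroup G] [Fintype G] [AddCommMonoid M]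
    (f : G → M) : ∑ k, ∑ m, f (k - m) = Fintype.card G • ∑ k, f k := by
  have shift (m : G) : ∑ k, f (k - m) = ∑ k, f k := (Equiv.subRight m).sum_comp f
  rw [Finset.sum_comm]
  simp only [shift, Finset.sum_const, Finset.card_univ]

section TProd

variable {n₁ n₂ n₃ n₄ : ℕ} [NeZero n₃]

lemma bcirc_tProd (A : Fin n₁ → Fin n₂ → ZMod n₃ → ℝ) (B : Fin n₂ → Fin n₄ → ZMod n₃ → ℝ) :
    bcirc (tProd A B) = bcirc A * bcirc B := by
  ext ⟨i, k⟩ ⟨j, k'⟩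
  simp only [bcirc, tProd, Matrix.mul_apply, Fintype.sum_prod_type]
  refine Finset.sum_congr rfl fun l _ => ?_
  exact Fintype.sum_equiv (Equiv.addRight k') _ _ fun m => by simp [sub_sub, add_comm]

lemma sum_sq_bcirc (A : Fin n₁ → Fin n₂ → ZMod n₃ → ℝ) :
    ∑ p, ∑ q, bcirc A p q ^ 2 = n₃ * ∑ i, ∑ j, ∑ k, A i j k ^ 2 := by
  simp only [bcirc, Fintype.sum_prod_type]
  rw [Finset.mul_sum]
  refine Finset.sum_congr rfl fun i _ => ?_
  rw [Finset.sum_comm, Finset.mul_sum]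
  refine Finset.sum_congr rfl fun j _ => ?_
  simpa using Fintype.sum_sum_sub (A i j · ^ 2)

lemma sqrt_sum_sq_bcirc (A : Fin n₁ → Fin n₂ → ZMod n₃ → ℝ) :
    √(∑ p, ∑ q, bcirc A p q ^ 2) = √n₃ * frobNorm A := by
  rw [sum_sq_bcirc, Real.sqrt_mul n₃.cast_nonneg, frobNorm]

lemma frobNorm_tProd_le (A : Fin n₁ → Fin n₂ → ZMod n₃ → ℝ) (B : Fin n₂ → Fin n₄ → ZMod n₃ → ℝ) :
    frobNorm (tProd A B) ≤ √n₃ * frobNorm A * frobNorm B := by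
  have key := Matrix.sqrt_sum_sq_mul_le (bcirc A) (bcirc B)
  rw [← bcirc_tProd, sqrt_sum_sq_bcirc, sqrt_sum_sq_bcirc, sqrt_sum_sq_bcirc] at key
  have hn₃ : 0 < √(n₃ : ℝ) := Real.sqrt_pos.mpr (Nat.cast_pos.mpr (Nat.pos_of_neZero n₃))
  exact le_of_mul_le_mul_left (key.trans_eq (by ring)) hn₃

lemma specNorm_tProd_le (A : Fin n₁ → Fin n₂ → ZMod n₃ → ℝ) (B : Fin n₂ → Fin n₄ → ZMod n₃ → ℝ) :
    specNorm (tProd A B) ≤ specNorm A * specNorm B := by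
  rw [specNorm, specNorm, specNorm, bcirc_tProd]
  exact Matrix.l2_opNorm_mul (bcirc A) (bcirc B)

end TProd

theorem tprod_specNorm_le_general (n₁ n₂ n₃ n₄ : ℕ) [NeZero n₃]
    (A : Fin n₁ → Fin n₂ → ZMod n₃ → ℝ) (B : Fin n₂ → Fin n₄ → ZMod n₃ → ℝ) :
    specNorm (tProd A B) ≤ specNorm A * specNorm B ∧
      frobNorm (tProd A B) ≤ Real.sqrt n₃ * frobNorm A * frobNorm B :=
  ⟨specNorm_tProd_le A B, frobNorm_tProd_le A B⟩

theorem tprod_specNorm_le (n₁ n₂ n₃ n₄ : ℕ) [NeZero n₃]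
    (hn₁ : 0 < n₁) (hn₂ : 0 < n₂) (hn₄ : 0 < n₄)
    (A : Fin n₁ → Fin n₂ → ZMod n₃ → ℝ) (B : Fin n₂ → Fin n₄ → ZMod n₃ → ℝ) :
    specNorm (tProd A B) ≤ specNorm A * specNorm B ∧
      frobNorm (tProd A B) ≤ Real.sqrt n₃ * frobNorm A * frobNorm B :=
  tprod_specNorm_le_general n₁ n₂ n₃ n₄ A B
end

section
/- Let A be a real tensor of size n₁×n₂×n₃ with Moore-Penrose inverse Ap, and let D be a tensor of size n₁×n₄×n₃. Then the tensor equation A*X = D (X of size n₂×n₄×n₃) has a solution if and only if A*Ap*D = D; moreover, in that case, a tensor X of size n₂×n₄×n₃ satisfies A*X = D if and only if X = Ap*D + (𝓘 − Ap*A)*Y for some tensor Y of size n₂×n₄×n₃, where 𝓘 is the identity tensor of size n₂×n₂×n₃. -/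
open scoped Matrix.Norms.L2Operator

/-!
If `A * X = D` then `A * Ap * D = A * Ap * A * X = D`; conversely `Ap * D` is then a solution.
All solutions differ from it by the kernel of `X ↦ A * X`, which is the image of `𝓘 - Ap * A`:
`A * (𝓘 - Ap * A) = 0`, and `𝓘 - Ap * A` fixes every `Z` with `A * Z = 0`.
-/

section TProd

variable {n₁ n₂ n₃ n₄ n₅ : ℕ} [NeZero n₃]

lemma tProd_assoc (A : Fin n₁ → Fin n₂ → ZMod n₃ → ℝ) (B : Fin n₂ → Fin n₄ → ZMod n₃ → ℝ)
    (C : Fin n₄ → Fin n₅ → ZMod n₃ → ℝ) :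
    tProd (tProd A B) C = tProd A (tProd B C) := by
  funext i j k
  simp only [tProd, Finset.sum_mul, Finset.mul_sum]
  conv_lhs => enter [2, l]; rw [Finset.sum_comm]
  rw [Finset.sum_comm]
  conv_rhs => enter [2, p]; rw [Finset.sum_comm]
  conv_rhs => enter [2, p, 2, l]; rw [Finset.sum_comm]
  refine Finset.sum_congr rfl fun p _ => Finset.sum_congr rfl fun l _ =>
    Finset.sum_congr rfl fun m _ => ?_
  refine Fintype.sum_equiv (Equiv.addRight m) _ _ fun q => ?_
  simp only [Equiv.coe_addRight]
  rw [add_sub_cancel_right, sub_add_eq_sub_sub, sub_right_comm]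
  ring

lemma tId_tProd (B : Fin n₂ → Fin n₄ → ZMod n₃ → ℝ) : tProd (tId n₂ n₃) B = B := by
  funext i j k
  simp only [tProd, tId]
  rw [Finset.sum_eq_single i (fun l _ hl => by simp [Ne.symm hl]) (by simp),
    Finset.sum_eq_single k (fun m _ hm => by simp [sub_eq_zero, Ne.symm hm]) (by simp)]
  simp

lemma tProd_tId (A : Fin n₁ → Fin n₂ → ZMod n₃ → ℝ) : tProd A (tId n₂ n₃) = A := by
  funext i j k
  simp only [tProd, tId]
  rw [Finset.sum_eq_single j (fun l _ hl => by simp [hl]) (by simp),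
    Finset.sum_eq_single 0 (fun m _ hm => by simp [hm]) (by simp)]
  simp

lemma zero_tProd (B : Fin n₂ → Fin n₄ → ZMod n₃ → ℝ) :
    tProd (0 : Fin n₁ → Fin n₂ → ZMod n₃ → ℝ) B = 0 := by
  funext i j k
  simp [tProd]

lemma tProd_sub_left (A B : Fin n₁ → Fin n₂ → ZMod n₃ → ℝ) (C : Fin n₂ → Fin n₄ → ZMod n₃ → ℝ) :
    tProd (A - B) C = tProd A C - tProd B C := by
  funext i j k
  simp [tProd, sub_mul, Finset.sum_sub_distrib]

lemma tProd_add_right (A : Fin n₁ → Fin n₂ → ZMod n₃ → ℝ) (B C : Fin n₂ → Fin n₄ → ZMod n₃ → ℝ) :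
    tProd A (B + C) = tProd A B + tProd A C := by
  funext i j k
  simp [tProd, mul_add, Finset.sum_add_distrib]

lemma tProd_sub_right (A : Fin n₁ → Fin n₂ → ZMod n₃ → ℝ) (B C : Fin n₂ → Fin n₄ → ZMod n₃ → ℝ) :
    tProd A (B - C) = tProd A B - tProd A C := by
  funext i j k
  simp [tProd, mul_sub, Finset.sum_sub_distrib]

end TProd

section InnerInverse

variable {n₁ n₂ n₃ n₄ : ℕ} [NeZero n₃] {A : Fin n₁ → Fin n₂ → ZMod n₃ → ℝ}
  {G : Fin n₂ → Fin n₁ → ZMod n₃ → ℝ}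

lemma tProd_tId_sub_eq_zero (hG : tProd (tProd A G) A = A) :
    tProd A (tId n₂ n₃ - tProd G A) = 0 := by
  rw [tProd_sub_right, tProd_tId, ← tProd_assoc, hG, sub_self]

lemma exists_tProd_eq_iff (hG : tProd (tProd A G) A = A) (D : Fin n₁ → Fin n₄ → ZMod n₃ → ℝ) :
    (∃ X, tProd A X = D) ↔ tProd (tProd A G) D = D := by
  constructor
  · rintro ⟨X, rfl⟩
    rw [← tProd_assoc, hG]
  · intro hD
    exact ⟨tProd G D, by rw [← tProd_assoc, hD]⟩

lemma tProd_eq_iff_exists (hG : tProd (tProd A G) A = A) {D : Fin n₁ → Fin n₄ → ZMod n₃ → ℝ}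
    (hD : tProd (tProd A G) D = D) (X : Fin n₂ → Fin n₄ → ZMod n₃ → ℝ) :
    tProd A X = D ↔ ∃ Y, X = tProd G D + tProd (tId n₂ n₃ - tProd G A) Y := by
  constructor
  · rintro rfl
    refine ⟨X, ?_⟩
    rw [tProd_sub_left, tId_tProd, tProd_assoc]
    abel
  · rintro ⟨Y, rfl⟩
    rw [tProd_add_right, ← tProd_assoc, hD, ← tProd_assoc, tProd_tId_sub_eq_zero hG, zero_tProd,
      add_zero]

end InnerInverse

theorem tensor_equation_solvability_general (n₁ n₂ n₃ n₄ : ℕ) [NeZero n₃]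
    (A : Fin n₁ → Fin n₂ → ZMod n₃ → ℝ)
    (Ap : Fin n₂ → Fin n₁ → ZMod n₃ → ℝ)
    (hAp : IsMPInv A Ap)
    (D : Fin n₁ → Fin n₄ → ZMod n₃ → ℝ) :
    ((∃ X : Fin n₂ → Fin n₄ → ZMod n₃ → ℝ, tProd A X = D) ↔
        tProd (tProd A Ap) D = D) ∧
      (tProd (tProd A Ap) D = D →
        ∀ X : Fin n₂ → Fin n₄ → ZMod n₃ → ℝ,
          tProd A X = D ↔
            ∃ Y : Fin n₂ → Fin n₄ → ZMod n₃ → ℝ,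
              X = tProd Ap D + tProd (tId n₂ n₃ - tProd Ap A) Y) :=
  ⟨exists_tProd_eq_iff hAp.1 D, fun hD => tProd_eq_iff_exists hAp.1 hD⟩

theorem tensor_equation_solvability (n₁ n₂ n₃ n₄ : ℕ) [NeZero n₃]
    (hn₁ : 0 < n₁) (hn₂ : 0 < n₂) (hn₄ : 0 < n₄)
    (A : Fin n₁ → Fin n₂ → ZMod n₃ → ℝ)
    (Ap : Fin n₂ → Fin n₁ → ZMod n₃ → ℝ)
    (hAp : IsMPInv A Ap)
    (D : Fin n₁ → Fin n₄ → ZMod n₃ → ℝ) :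
    ((∃ X : Fin n₂ → Fin n₄ → ZMod n₃ → ℝ, tProd A X = D) ↔
        tProd (tProd A Ap) D = D) ∧
      (tProd (tProd A Ap) D = D →
        ∀ X : Fin n₂ → Fin n₄ → ZMod n₃ → ℝ,
          tProd A X = D ↔
            ∃ Y : Fin n₂ → Fin n₄ → ZMod n₃ → ℝ,
              X = tProd Ap D + tProd (tId n₂ n₃ - tProd Ap A) Y) :=
  tensor_equation_solvability_general n₁ n₂ n₃ n₄ A Ap hAp D
end
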